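/- arXiv:1801.08751 — 7 statements merged into one kernel-verified Lean document; each statement's English description precedes it below -/
import Mathlib

section
/- Let d, k ≥ 1 be integers, u^1, ..., u^k ∈ ℤ^d, and α_1, ..., α_k ≥ 0 real numbers. If α_1 + ... + α_k ≥ d, then there exist real numbers β_i ∈ [0, α_i] for i = 1, ..., k, not all zero, such that β_1 u^1 + ... + β_k u^k ∈ ℤ^d. -/
/-!
Clearing denominators with a large prime `p` turns the problem into one about zero-sum
subsequences of `(ℤ/p)^d`. Repeating `u^i` about `(1 + ε) p α_i` times gives more than
`d (p - 1)` vectors because `∑ α_i ≥ d`, so by Olson's theorem (a consequence of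
Chevalley–Warning) a nonempty subsequence sums to `0` modulo `p`; its multiplicities divided by
`p` are weights `β_i ≤ (1 + ε) α_i` with integral combination. As `ε → 0` these weights, shrunk
into the box `∏ [0, α_i]`, accumulate at some `β`. If `β ≠ 0` it is a solution, since integral
combinations form a closed set. If `β = 0`, the integral combinations of the approximants tend
to `0`, hence vanish eventually, and then any rescaling of such an approximant is a solution.
-/

open MvPolynomial Finset Filter Topology

section Olson

variable {K ι τ : Type*} [Field K] [Fintype K] [Fintype ι] [Fintype τ]

theorem exists_nonempty_sum_eq_zero_of_card_lt (g : ι → τ → K)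
    (hcard : Fintype.card τ * (Fintype.card K - 1) < Fintype.card ι) :
    ∃ S : Finset ι, S.Nonempty ∧ ∑ i ∈ S, g i = 0 := by
  classical
  obtain ⟨p, _, -, hp, -⟩ := FiniteField.card' K
  -- `x ^ (q - 1)` is the indicator function of `x ≠ 0` on a field with `q` elements
  let f : τ → MvPolynomial ι K := fun j => ∑ i, g i j • X i ^ (Fintype.card K - 1)
  have hdeg : ∑ j, (f j).totalDegree < Fintype.card ι := by
    refine lt_of_le_of_lt ?_ hcard
    calc ∑ j, (f j).totalDegree ≤ ∑ _j : τ, (Fintype.card K - 1) := by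
          gcongr with j
          refine totalDegree_finsetSum_le fun i _ => ?_
          exact (totalDegree_smul_le ..).trans (totalDegree_X_pow ..).le
      _ = Fintype.card τ * (Fintype.card K - 1) := by simp
  have heval (x : ι → K) (j : τ) : eval x (f j) = ∑ i ∈ univ.filter (x · ≠ 0), g i j := by
    rw [sum_filter, map_sum]
    refine Fintype.sum_congr _ _ fun i => ?_
    split_ifs with hx
    · simp [FiniteField.pow_card_sub_one_eq_one _ hx]
    · simp [not_not.1 hx, zero_pow (Nat.sub_ne_zero_of_lt Fintype.one_lt_card)]
  let zero : {x : ι → K // ∀ j, eval x (f j) = 0} := ⟨0, fun j => by rw [heval]; simp⟩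
  have hcard_solutions := Nat.le_of_dvd (Fintype.card_pos_iff.2 ⟨zero⟩)
    (char_dvd_card_solutions_of_fintype_sum_lt p hdeg)
  obtain ⟨⟨x, hx⟩, hx0⟩ :=
    Fintype.exists_ne_of_one_lt_card (hp.one_lt.trans_le hcard_solutions) zero
  refine ⟨univ.filter (x · ≠ 0), ?_, funext fun j => by simpa [heval] using hx j⟩
  obtain ⟨i, hi⟩ := Function.ne_iff.1 (Subtype.coe_ne_coe.2 hx0)
  exact ⟨i, by simpa [zero] using hi⟩

theorem exists_le_ne_zero_sum_nsmul_eq_zero (b : ι → ℕ) (g : ι → τ → K)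
    (hb : Fintype.card τ * (Fintype.card K - 1) < ∑ i, b i) :
    ∃ t : ι → ℕ, t ≤ b ∧ t ≠ 0 ∧ ∑ i, t i • g i = 0 := by
  classical
  obtain ⟨S, ⟨s, hs⟩, hS⟩ := exists_nonempty_sum_eq_zero_of_card_lt
    (fun s : (i : ι) × Fin (b i) => g s.1) (by simpa using hb)
  refine ⟨fun i => #{x : Fin (b i) | ⟨i, x⟩ ∈ S}, fun i => ?_, ?_, ?_⟩
  · simpa using card_filter_le (univ : Finset (Fin (b i))) _
  · exact Function.ne_iff.2 ⟨s.1, (card_pos.2 ⟨s.2, by simpa using hs⟩).ne'⟩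
  · rw [← hS]
    simp only [card_eq_sum_ones, sum_smul, sum_filter, ite_smul, one_smul, zero_smul]
    rw [← Fintype.sum_sigma (f := fun s => if s ∈ S then g s.1 else 0), sum_ite_mem, univ_inter]

end Olson

theorem Int.exists_le_ne_zero_dvd_sum_mul {ι τ : Type*} [Fintype ι] [Fintype τ]
    (p : ℕ) [Fact p.Prime] (b : ι → ℕ) (u : ι → τ → ℤ)
    (hb : Fintype.card τ * (p - 1) < ∑ i, b i) :
    ∃ t : ι → ℕ, t ≤ b ∧ t ≠ 0 ∧ ∀ j, (p : ℤ) ∣ ∑ i, (t i : ℤ) * u i j := by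
  obtain ⟨t, htb, ht0, hsum⟩ :=
    exists_le_ne_zero_sum_nsmul_eq_zero b (fun i j => (u i j : ZMod p)) (by simpa using hb)
  refine ⟨t, htb, ht0, fun j => ?_⟩
  rw [← ZMod.intCast_zmod_eq_zero_iff_dvd]
  simpa using congrFun hsum j

theorem mul_le_sum_floor {ι : Type*} [Fintype ι] {d p : ℕ} (hd : 1 ≤ d) {α : ι → ℝ}
    (hsum : (d : ℝ) ≤ ∑ i, α i) {ε : ℝ} (hε : (Fintype.card ι : ℝ) ≤ p * ε) :
    d * p ≤ ∑ i, ⌊p * ((1 + ε) * α i)⌋₊ := by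
  have hfloor : ∑ i, ((p : ℝ) * ((1 + ε) * α i) - 1) ≤ ∑ i, (⌊p * ((1 + ε) * α i)⌋₊ : ℝ) :=
    sum_le_sum fun i _ => (Nat.sub_one_lt_floor _).le
  have hlin : ∑ i, ((p : ℝ) * ((1 + ε) * α i) - 1) =
      p * (1 + ε) * ∑ i, α i - Fintype.card ι := by
    simp [sum_sub_distrib, mul_sum, mul_assoc]
  have hd' : (1 : ℝ) ≤ d := by exact_mod_cast hd
  have hp : (0 : ℝ) ≤ p := p.cast_nonneg
  have hpε : 0 ≤ (p : ℝ) * ε := (Nat.cast_nonneg _).trans hε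
  suffices (d : ℝ) * p ≤ ∑ i, (⌊p * ((1 + ε) * α i)⌋₊ : ℝ) by exact_mod_cast this
  rw [hlin] at hfloor
  nlinarith [mul_le_mul_of_nonneg_left hsum (add_nonneg hp hpε)]

section IntegralWeights

variable {ι τ : Type*} [Fintype ι]

def integralWeights (u : ι → τ → ℤ) : Set (ι → ℝ) :=
  {β | ∀ j, ∃ z : ℤ, ∑ i, β i * (u i j : ℝ) = z}

variable {u : ι → τ → ℤ}

theorem isClosed_integralWeights : IsClosed (integralWeights u) := by
  have : integralWeights u =
      ⋂ j, (fun β : ι → ℝ => ∑ i, β i * (u i j : ℝ)) ⁻¹' Set.range Int.cast := by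
    ext β
    simp [integralWeights, eq_comm]
  rw [this]
  exact isClosed_iInter fun j =>
    Int.isClosedEmbedding_coe_real.isClosed_range.preimage (by fun_prop)

theorem natCast_div_mem_integralWeights {n : ℕ} {t : ι → ℕ}
    (h : ∀ j, (n : ℤ) ∣ ∑ i, (t i : ℤ) * u i j) :
    (fun i => (t i : ℝ) / n) ∈ integralWeights u := by
  intro j
  obtain ⟨m, hm⟩ := h j
  rcases eq_or_ne n 0 with rfl | hn
  · exact ⟨0, by simp⟩
  refine ⟨m, ?_⟩
  have hm' : ∑ i, (t i : ℝ) * u i j = n * m := by exact_mod_cast hm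
  simp_rw [div_mul_eq_mul_div, ← sum_div, hm']
  field_simp

theorem smul_mem_integralWeights {β : ι → ℝ} (hβ : β ∈ integralWeights u)
    (hsmall : ∀ j, |∑ i, β i * (u i j : ℝ)| < 1) (c : ℝ) : c • β ∈ integralWeights u := by
  intro j
  obtain ⟨z, hz⟩ := hβ j
  have hz0 : z = 0 := by
    have := hsmall j
    rw [hz, ← Int.cast_abs, ← Int.cast_one, Int.cast_lt] at this
    exact Int.abs_lt_one_iff.1 this
  refine ⟨0, ?_⟩
  simp only [Pi.smul_apply, smul_eq_mul, mul_assoc, ← mul_sum, hz, hz0, Int.cast_zero, mul_zero]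

theorem exists_mem_integralWeights_Icc_one_add_smul [Fintype τ] (u : ι → τ → ℤ) {α : ι → ℝ}
    (hα : 0 ≤ α) (hτ : 1 ≤ Fintype.card τ) (hsum : (Fintype.card τ : ℝ) ≤ ∑ i, α i)
    {ε : ℝ} (hε : 0 < ε) :
    ∃ β ∈ integralWeights u, β ≠ 0 ∧ β ∈ Set.Icc 0 ((1 + ε) • α) := by
  obtain ⟨p, hpε, hp⟩ := Nat.exists_infinite_primes ⌈Fintype.card ι / ε⌉₊
  have := Fact.mk hp
  have hpε' : (Fintype.card ι : ℝ) ≤ p * ε :=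
    (div_le_iff₀ hε).1 ((Nat.le_ceil _).trans (by exact_mod_cast hpε))
  set b : ι → ℕ := fun i => ⌊p * ((1 + ε) * α i)⌋₊
  have hb : Fintype.card τ * (p - 1) < ∑ i, b i :=
    ((Nat.mul_lt_mul_left hτ).2 (Nat.sub_lt hp.pos one_pos)).trans_le
      (mul_le_sum_floor hτ hsum hpε')
  obtain ⟨t, htb, ht0, hdvd⟩ := Int.exists_le_ne_zero_dvd_sum_mul p b u hb
  refine ⟨fun i => t i / p, natCast_div_mem_integralWeights hdvd, ?_, fun i => ?_, fun i => ?_⟩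
  · obtain ⟨i, hi⟩ := Function.ne_iff.1 ht0
    exact Function.ne_iff.2 ⟨i, div_ne_zero (by exact_mod_cast hi) (by exact_mod_cast hp.ne_zero)⟩
  · exact div_nonneg (Nat.cast_nonneg _) (Nat.cast_nonneg _)
  · rw [Pi.smul_apply, smul_eq_mul, div_le_iff₀ (Nat.cast_pos.2 hp.pos), mul_comm _ (p : ℝ)]
    exact (Nat.cast_le.2 (htb i)).trans
      (Nat.floor_le (mul_nonneg p.cast_nonneg (mul_nonneg (by linarith) (hα i))))

theorem exists_mem_integralWeights_Icc_of_forall_one_add_smul [Finite τ] {α : ι → ℝ}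
    (h : ∀ ε : ℝ, 0 < ε → ∃ β ∈ integralWeights u, β ≠ 0 ∧ β ∈ Set.Icc 0 ((1 + ε) • α)) :
    ∃ β ∈ integralWeights u, β ≠ 0 ∧ β ∈ Set.Icc 0 α := by
  choose β hβL hβ0 hβα using fun n : ℕ => h (1 / ((n : ℝ) + 1)) (by positivity)
  set c : ℕ → ℝ := fun n => 1 + 1 / ((n : ℝ) + 1)
  have hc : Tendsto c atTop (𝓝 1) := by
    simpa [c] using (tendsto_one_div_add_atTop_nhds_zero_nat (𝕜 := ℝ)).const_add 1
  have hcpos : ∀ n, 0 < c n := fun n => by positivity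
  have hγ : ∀ n, (c n)⁻¹ • β n ∈ Set.Icc 0 α := fun n => by
    have hcinv := inv_nonneg.2 (hcpos n).le
    refine ⟨smul_nonneg hcinv (hβα n).1, ?_⟩
    calc (c n)⁻¹ • β n ≤ (c n)⁻¹ • c n • α := smul_le_smul_of_nonneg_left (hβα n).2 hcinv
      _ = α := inv_smul_smul₀ (hcpos n).ne' α
  obtain ⟨a, haα, φ, hφ, hlim⟩ := isCompact_Icc.tendsto_subseq hγ
  have hβlim : Tendsto (fun n => β (φ n)) atTop (𝓝 a) := by
    simpa [smul_smul, (hcpos _).ne'] using (hc.comp hφ.tendsto_atTop).smul hlim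
  have hsum_lim : ∀ j, Tendsto (fun n => ∑ i, β (φ n) i * (u i j : ℝ)) atTop
      (𝓝 (∑ i, a i * (u i j : ℝ))) := fun j =>
    tendsto_finsetSum _ fun i _ => ((continuous_apply i).tendsto a |>.comp hβlim).mul_const _
  by_cases ha : a = 0
  · subst ha
    have hsmall : ∀ᶠ n in atTop, ∀ j, |∑ i, β (φ n) i * (u i j : ℝ)| < 1 :=
      eventually_all.2 fun j => (hsum_lim j).abs.eventually_lt_const (by simp)
    obtain ⟨n, hn⟩ := hsmall.exists
    exact ⟨_, smul_mem_integralWeights (hβL _) hn (c (φ n))⁻¹,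
      smul_ne_zero (inv_ne_zero (hcpos _).ne') (hβ0 _), hγ _⟩
  · exact ⟨a, isClosed_integralWeights.mem_of_tendsto hβlim (.of_forall fun n => hβL _),
      ha, haα⟩

end IntegralWeights

theorem olson_mip_feasibility_general (d k : ℕ) (hd : 1 ≤ d)
    (u : Fin k → Fin d → ℤ) (α : Fin k → ℝ) (hα : ∀ i, 0 ≤ α i)
    (hsum : (d : ℝ) ≤ ∑ i, α i) :
    ∃ β : Fin k → ℝ, (∀ i, β i ∈ Set.Icc 0 (α i)) ∧ (∃ i, β i ≠ 0) ∧
      ∀ j : Fin d, ∃ z : ℤ, ∑ i, β i * (u i j : ℝ) = (z : ℝ) := by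
  obtain ⟨β, hβ, hβ0, hβα⟩ := exists_mem_integralWeights_Icc_of_forall_one_add_smul
    fun _ε hε => exists_mem_integralWeights_Icc_one_add_smul u (α := α) hα
      (by simpa using hd) (by simpa using hsum) hε
  exact ⟨β, fun i => ⟨hβα.1 i, hβα.2 i⟩, Function.ne_iff.1 hβ0, hβ⟩

theorem olson_mip_feasibility (d k : ℕ) (hd : 1 ≤ d) (hk : 1 ≤ k)
    (u : Fin k → Fin d → ℤ) (α : Fin k → ℝ) (hα : ∀ i, 0 ≤ α i)
    (hsum : (d : ℝ) ≤ ∑ i, α i) :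
    ∃ β : Fin k → ℝ, (∀ i, β i ∈ Set.Icc 0 (α i)) ∧ (∃ i, β i ≠ 0) ∧
      ∀ j : Fin d, ∃ z : ℤ, ∑ i, β i * (u i j : ℝ) = (z : ℝ) :=
  olson_mip_feasibility_general d k hd u α hα hsum
end

section
/- Let d, p ≥ 1 be integers with p prime, and let f^1, ..., f^r ∈ ℤ^d with r ≥ pd − d + 1. Then there exists a non-empty subset I ⊆ {1, ..., r} such that ∑_{i ∈ I} f^i ∈ pℤ^d, i.e., every coordinate of the sum is divisible by p. -/
/-!
Reduce modulo `p` and apply the Chevalley–Warning theorem to the `d` polynomials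
`g_j = ∑ᵢ f^i_j x_i^(p-1)` over `𝔽_p`: they have degree `p - 1` in `r > d (p - 1)` variables and the
common zero `0`, so they have a common zero `x ≠ 0`. Since `a^(p-1) = 1` for `a ≠ 0`, evaluating
`g_j` at `x` gives `∑_{i ∈ I} f^i_j` with `I` the support of `x`.
-/

open Finset MvPolynomial

namespace FiniteField

variable {K σ ι : Type*} [Field K] [Fintype K] [Fintype σ]

theorem exists_ne_zero_forall_eval_eq_zero [Fintype ι] {g : ι → MvPolynomial σ K}
    (h0 : ∀ j, eval 0 (g j) = 0) (hdeg : ∑ j, (g j).totalDegree < Fintype.card σ) :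
    ∃ x : σ → K, x ≠ 0 ∧ ∀ j, eval x (g j) = 0 := by
  classical
  let zero : {x : σ → K // ∀ j, eval x (g j) = 0} := ⟨0, h0⟩
  have hdvd := char_dvd_card_solutions_of_fintype_sum_lt (ringChar K) hdeg
  have hcard := (CharP.char_is_prime K (ringChar K)).one_lt.trans_le <|
    Nat.le_of_dvd (Fintype.card_pos_iff.2 ⟨zero⟩) hdvd
  obtain ⟨x, hx⟩ := Fintype.exists_ne_of_one_lt_card hcard zero
  exact ⟨x, fun h => hx (Subtype.ext h), x.2⟩

theorem eval_sum_C_mul_X_pow_card_sub_one [DecidableEq K] (a x : σ → K) :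
    eval x (∑ i, C (a i) * X i ^ (Fintype.card K - 1)) = ∑ i with x i ≠ 0, a i := by
  rw [sum_filter, map_sum]
  refine sum_congr rfl fun i _ => ?_
  by_cases hi : x i = 0
  · simp [hi, Nat.sub_ne_zero_of_lt Fintype.one_lt_card]
  · simp [hi, pow_card_sub_one_eq_one _ hi]

theorem exists_nonempty_sum_eq_zero [Fintype ι] (v : ι → σ → K)
    (h : Fintype.card σ * (Fintype.card K - 1) < Fintype.card ι) :
    ∃ I : Finset ι, I.Nonempty ∧ ∑ i ∈ I, v i = 0 := by
  classical
  set g : σ → MvPolynomial ι K := fun j => ∑ i, C (v i j) * X i ^ (Fintype.card K - 1)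
  have hdeg : ∑ j, (g j).totalDegree < Fintype.card ι := calc
    ∑ j, (g j).totalDegree ≤ ∑ _j : σ, (Fintype.card K - 1) :=
      sum_le_sum fun j _ => totalDegree_finsetSum_le fun i _ =>
        (totalDegree_mul _ _).trans <| by simp [totalDegree_X_pow]
    _ < Fintype.card ι := by simpa using h
  obtain ⟨x, hx0, hx⟩ := exists_ne_zero_forall_eval_eq_zero
    (g := g) (fun j => by rw [eval_sum_C_mul_X_pow_card_sub_one]; simp) hdeg
  refine ⟨({i | x i ≠ 0} : Finset ι), ?_, funext fun j => ?_⟩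
  · obtain ⟨i, hi⟩ := Function.ne_iff.1 hx0
    exact ⟨i, by simpa using hi⟩
  · simpa only [g, eval_sum_C_mul_X_pow_card_sub_one, Finset.sum_apply, Pi.zero_apply] using hx j

end FiniteField

theorem olson_corollary_general (d p r : ℕ) (hp : p.Prime)
    (hr : p * d - d + 1 ≤ r) (f : Fin r → Fin d → ℤ) :
    ∃ I : Finset (Fin r), I.Nonempty ∧ ∀ j : Fin d, (p : ℤ) ∣ ∑ i ∈ I, f i j := by
  have : Fact p.Prime := ⟨hp⟩
  have hcard : Fintype.card (Fin d) * (Fintype.card (ZMod p) - 1) < Fintype.card (Fin r) := by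
    simp only [Fintype.card_fin, ZMod.card, Nat.mul_sub_one, mul_comm d p]
    omega
  obtain ⟨I, hI, hsum⟩ :=
    FiniteField.exists_nonempty_sum_eq_zero (fun i j => (f i j : ZMod p)) hcard
  refine ⟨I, hI, fun j => ?_⟩
  rw [← ZMod.intCast_zmod_eq_zero_iff_dvd, Int.cast_sum]
  simpa using congrFun hsum j

theorem olson_corollary (d p r : ℕ) (hd : 1 ≤ d) (hp : p.Prime)
    (hr : p * d - d + 1 ≤ r) (f : Fin r → Fin d → ℤ) :
    ∃ I : Finset (Fin r), I.Nonempty ∧ ∀ j : Fin d, (p : ℤ) ∣ ∑ i ∈ I, f i j :=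
  olson_corollary_general d p r hp hr f
end

section
/- Let p be prime and d ≥ 1. For any sequence g^1, ..., g^k of elements of the group (ℤ/pℤ)^d with k ≥ pd − d + 1, there exists a non-empty subset I ⊆ {1, ..., k} with ∑_{i ∈ I} g^i = 0. -/
open MvPolynomial Finset

theorem davenport_upper_bound (d p k : ℕ) (hd : 1 ≤ d) (hp : p.Prime)
    (hk : p * d - d + 1 ≤ k) (g : Fin k → (Fin d → ZMod p)) :
    ∃ I : Finset (Fin k), I.Nonempty ∧ ∑ i ∈ I, g i = 0 := by
  haveI : Fact p.Prime := ⟨hp⟩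
  -- the polynomials
  set f : Fin d → MvPolynomial (Fin k) (ZMod p) :=
    fun j => ∑ i, C (g i j) * X i ^ (p - 1) with hf
  have hdeg : ∀ j, (f j).totalDegree ≤ p - 1 := by
    intro j
    refine (totalDegree_finset_sum _ _).trans ?_
    apply Finset.sup_le
    intro i _
    refine (totalDegree_mul _ _).trans ?_
    simp [totalDegree_X_pow]
  have hsum : (∑ j, (f j).totalDegree) < Fintype.card (Fin k) := by
    rw [Fintype.card_fin]
    calc ∑ j, (f j).totalDegree ≤ ∑ _j : Fin d, (p - 1) :=
          Finset.sum_le_sum fun j _ => hdeg j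
      _ = d * (p - 1) := by simp [mul_comm]
      _ < k := by
          have h1 : p * d - d = d * (p - 1) := by
            rw [mul_comm d, Nat.sub_mul, one_mul]
          omega
  have hdvd := char_dvd_card_solutions_of_fintype_sum_lt p hsum
  have h0 : ∀ j, eval (0 : Fin k → ZMod p) (f j) = 0 := by
    intro j
    simp only [hf, map_sum, map_mul, map_pow, eval_C, eval_X]
    have hp1 : p - 1 ≠ 0 := by have := hp.two_le; omega
    simp [Pi.zero_apply, zero_pow hp1]
  have hpos : 0 < Fintype.card { x : Fin k → ZMod p // ∀ j, eval x (f j) = 0 } :=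
    Fintype.card_pos_iff.mpr ⟨⟨0, h0⟩⟩
  have hlt : 1 < Fintype.card { x : Fin k → ZMod p // ∀ j, eval x (f j) = 0 } := by
    have := hp.two_le
    have := Nat.le_of_dvd hpos (by convert hdvd)
    omega
  obtain ⟨x, hx⟩ := Fintype.exists_ne_of_one_lt_card hlt ⟨0, h0⟩
  have hxne : (x : Fin k → ZMod p) ≠ 0 := by
    intro h
    exact hx (Subtype.ext h)
  obtain ⟨i0, hi0⟩ := Function.ne_iff.mp hxne
  refine ⟨Finset.univ.filter (fun i => (x : Fin k → ZMod p) i ≠ 0), ⟨i0, by simpa using hi0⟩, ?_⟩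
  funext j
  have hxj := x.2 j
  simp only [hf, map_sum, map_mul, map_pow, eval_C, eval_X] at hxj
  rw [Finset.sum_apply]
  calc ∑ i ∈ Finset.univ.filter (fun i => (x : Fin k → ZMod p) i ≠ 0), g i j
      = ∑ i ∈ Finset.univ.filter (fun i => (x : Fin k → ZMod p) i ≠ 0),
          g i j * (x : Fin k → ZMod p) i ^ (p - 1) := by
        apply Finset.sum_congr rfl
        intro i hi
        rw [ZMod.pow_card_sub_one_eq_one (by simpa using hi), mul_one]
    _ = ∑ i, g i j * (x : Fin k → ZMod p) i ^ (p - 1) := by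
        apply Finset.sum_subset (Finset.filter_subset _ _)
        intro i _ hi
        simp only [Finset.mem_filter, Finset.mem_univ, true_and, not_not] at hi
        rw [hi, zero_pow (by have := hp.two_le; omega), mul_zero]
    _ = 0 := hxj
end

section
/- Let p be prime and d ≥ 1. There exists a sequence of pd − d elements of (ℤ/pℤ)^d (namely, each standard basis vector repeated p − 1 times) such that no non-empty subset sums to zero. Hence the Davenport constant of (ℤ/pℤ)^d is exactly pd − d + 1. -/
open Finset MvPolynomial

theorem davenport_exact (d p : ℕ) (hd : 1 ≤ d) (hp : p.Prime) :
    (∃ g : Fin (p * d - d) → (Fin d → ZMod p),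
      ∀ I : Finset (Fin (p * d - d)), I.Nonempty → ∑ i ∈ I, g i ≠ 0) ∧
    IsLeast {k : ℕ | ∀ g : Fin k → (Fin d → ZMod p),
      ∃ I : Finset (Fin k), I.Nonempty ∧ ∑ i ∈ I, g i = 0} (p * d - d + 1) := by
  classical
  have hp2 := hp.two_le
  haveI : Fact p.Prime := ⟨hp⟩
  have hpd : d * (p - 1) = p * d - d := by
    rw [Nat.mul_sub, mul_one, mul_comm]
  -- Part 1: the extremal sequence
  have part1 : ∃ g : Fin (p * d - d) → (Fin d → ZMod p),
      ∀ I : Finset (Fin (p * d - d)), I.Nonempty → ∑ i ∈ I, g i ≠ 0 := by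
    let e : Fin (p * d - d) ≃ Fin d × Fin (p - 1) :=
      (finCongr hpd.symm).trans finProdFinEquiv.symm
    refine ⟨fun i j => if (e i).1 = j then 1 else 0, ?_⟩
    intro I hI hsum
    obtain ⟨i0, hi0⟩ := hI
    have hj := congrFun hsum (e i0).1
    rw [Finset.sum_apply] at hj
    rw [Finset.sum_boole] at hj
    set c := (I.filter (fun i => (e i).1 = (e i0).1)).card with hc
    have hc1 : 1 ≤ c := by
      apply Finset.card_pos.2
      exact ⟨i0, Finset.mem_filter.2 ⟨hi0, rfl⟩⟩
    have hc2 : c ≤ p - 1 := by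
      have := Finset.card_le_card_of_injOn (f := fun i => (e i).2)
        (s := I.filter (fun i => (e i).1 = (e i0).1)) (t := Finset.univ)
        (fun _ _ => Finset.mem_univ _) ?_
      · simpa using this
      · intro a ha b hb hab
        have ha' := (Finset.mem_filter.1 ha).2
        have hb' := (Finset.mem_filter.1 hb).2
        apply e.injective
        exact Prod.ext (ha'.trans hb'.symm) hab
    have : p ∣ c := (ZMod.natCast_eq_zero_iff c p).1 hj
    have := Nat.le_of_dvd (by omega) this
    omega
  refine ⟨part1, ?_, ?_⟩
  · -- membership: Chevalley–Warning
    intro g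
    let f : Fin d → MvPolynomial (Fin (p * d - d + 1)) (ZMod p) :=
      fun j => ∑ i, C (g i j) * X i ^ (p - 1)
    have hdeg : ∀ j, (f j).totalDegree ≤ p - 1 := by
      intro j
      refine (totalDegree_finset_sum _ _).trans ?_
      apply Finset.sup_le
      intro i _
      calc (C (g i j) * X i ^ (p - 1)).totalDegree
          ≤ (C (g i j)).totalDegree + (X i ^ (p-1) : MvPolynomial (Fin (p * d - d + 1)) (ZMod p)).totalDegree :=
            totalDegree_mul _ _
        _ ≤ p - 1 := by
            rw [totalDegree_C, totalDegree_X_pow]; omega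
    have hsum : (∑ j, (f j).totalDegree) < Fintype.card (Fin (p * d - d + 1)) := by
      rw [Fintype.card_fin]
      calc (∑ j : Fin d, (f j).totalDegree) ≤ ∑ j : Fin d, (p - 1) :=
            Finset.sum_le_sum (fun j _ => hdeg j)
        _ = d * (p - 1) := by simp [mul_comm]
        _ < p * d - d + 1 := by omega
    have hdvd := char_dvd_card_solutions_of_fintype_sum_lt p hsum
    have h0 : ∀ j, eval (0 : Fin (p * d - d + 1) → ZMod p) (f j) = 0 := by
      intro j
      simp only [f, map_sum, eval_mul, eval_C, eval_pow, eval_X]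
      simp [zero_pow (by omega : p - 1 ≠ 0)]
    have hdvd' : p ∣ Fintype.card { x : Fin (p * d - d + 1) → ZMod p // ∀ j, eval x (f j) = 0 } := by
      convert hdvd using 2
    have hcard : 1 < Fintype.card { x : Fin (p * d - d + 1) → ZMod p // ∀ j, eval x (f j) = 0 } := by
      have hpos : 0 < Fintype.card { x : Fin (p * d - d + 1) → ZMod p // ∀ j, eval x (f j) = 0 } :=
        Fintype.card_pos_iff.2 ⟨⟨0, h0⟩⟩
      have := Nat.le_of_dvd hpos hdvd'
      omega
    obtain ⟨⟨x, hx⟩, hxne⟩ := Fintype.exists_ne_of_one_lt_card hcard ⟨0, h0⟩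
    have hxne0 : x ≠ 0 := fun h => hxne (by simp [h])
    refine ⟨Finset.univ.filter (fun i => x i ≠ 0), ?_, ?_⟩
    · obtain ⟨i, hi⟩ := Function.ne_iff.1 hxne0
      exact ⟨i, Finset.mem_filter.2 ⟨Finset.mem_univ i, hi⟩⟩
    · funext j
      have := hx j
      simp only [f, map_sum, eval_mul, eval_C, eval_pow, eval_X] at this
      have key : (∑ i ∈ Finset.univ.filter (fun i => x i ≠ 0), g i j)
          = ∑ i : Fin (p * d - d + 1), g i j * x i ^ (p - 1) := by
        rw [Finset.sum_filter]
        apply Finset.sum_congr rfl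
        intro i _
        by_cases hxi : x i ≠ 0
        · rw [if_pos hxi, ZMod.pow_card_sub_one_eq_one hxi, mul_one]
        · rw [if_neg hxi]
          push_neg at hxi
          rw [hxi, zero_pow (by omega : p - 1 ≠ 0), mul_zero]
      rw [Finset.sum_apply, key, this]
      simp
  · -- lower bound
    intro k hk
    by_contra hlt
    push_neg at hlt
    have hle : k ≤ p * d - d := by omega
    obtain ⟨g0, hg0⟩ := part1
    obtain ⟨I, hI, hIsum⟩ := hk (fun i => g0 (Fin.castLE hle i))
    refine hg0 (I.map (Fin.castLEEmb hle)) ?_ ?_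
    · exact Finset.map_nonempty.2 hI
    · rw [Finset.sum_map]
      exact hIsum
end

section
/- Let d, k ≥ 1, u^1, ..., u^k ∈ ℤ^d, and let q_1, ..., q_k be non-negative integers with p prime such that q_1 + ... + q_k ≥ pd. Then there exist integers ℓ_i with 0 ≤ ℓ_i ≤ q_i for each i, not all zero, such that ∑_{i=1}^k ℓ_i u^i ∈ pℤ^d. -/
open MvPolynomial Finset

set_option maxHeartbeats 1000000 in
theorem rational_case_lemma (d k p : ℕ) (hd : 1 ≤ d) (hk : 1 ≤ k) (hp : p.Prime)
    (u : Fin k → Fin d → ℤ) (q : Fin k → ℕ) (hq : p * d ≤ ∑ i, q i) :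
    ∃ ℓ : Fin k → ℕ, (∀ i, ℓ i ≤ q i) ∧ (∃ i, ℓ i ≠ 0) ∧
      ∀ j : Fin d, (p : ℤ) ∣ ∑ i, (ℓ i : ℤ) * u i j := by
  haveI : Fact p.Prime := ⟨hp⟩
  have hp2 : 2 ≤ p := hp.two_le
  have hppos : 0 < p - 1 := by omega
  set σ : Type := Σ i : Fin k, Fin (q i) with hσ
  have hcard : Fintype.card σ = ∑ i, q i := by
    simp [hσ, Fintype.card_sigma]
  set f : Fin d → MvPolynomial σ (ZMod p) :=
    fun j => ∑ t : σ, MvPolynomial.C ((u t.1 j : ZMod p)) * (MvPolynomial.X t) ^ (p - 1)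
    with hf
  have hdeg : ∑ j : Fin d, (f j).totalDegree < Fintype.card σ := by
    have h1 : ∀ j : Fin d, (f j).totalDegree ≤ p - 1 := by
      intro j
      rw [hf]
      refine (MvPolynomial.totalDegree_finset_sum _ _).trans ?_
      apply Finset.sup_le
      intro t _
      refine (MvPolynomial.totalDegree_mul _ _).trans ?_
      rw [MvPolynomial.totalDegree_C, MvPolynomial.totalDegree_X_pow]
      omega
    calc ∑ j : Fin d, (f j).totalDegree ≤ ∑ j : Fin d, (p - 1) :=
          Finset.sum_le_sum fun j _ => h1 j
      _ = d * (p - 1) := by simp [mul_comm]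
      _ < d * p := mul_lt_mul_of_pos_left (by omega) (by omega)
      _ = p * d := mul_comm d p
      _ ≤ Fintype.card σ := by rw [hcard]; exact hq
  have hdvd := char_dvd_card_solutions_of_fintype_sum_lt (K := ZMod p) (σ := σ) p hdeg (f := f)
  have hzero : ∀ j, eval (0 : σ → ZMod p) (f j) = 0 := by
    intro j
    simp [hf, zero_pow hppos.ne']
  -- there is a nonzero solution
  obtain ⟨x, hxsol, hxne⟩ : ∃ x : σ → ZMod p, (∀ j, eval x (f j) = 0) ∧ x ≠ 0 := by
    have hpos : 0 < Fintype.card { x : σ → ZMod p // ∀ i, eval x (f i) = 0 } :=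
      Fintype.card_pos_iff.2 ⟨⟨0, hzero⟩⟩
    have h2 : 1 < Fintype.card { x : σ → ZMod p // ∀ i, eval x (f i) = 0 } :=
      lt_of_lt_of_le hp.one_lt (Nat.le_of_dvd hpos (by convert hdvd))
    obtain ⟨a, b, hab⟩ := Fintype.exists_pair_of_one_lt_card h2
    rcases eq_or_ne a.val 0 with ha | ha
    · exact ⟨b.1, b.2, fun hb => hab (Subtype.ext (by rw [ha, hb]))⟩
    · exact ⟨a.1, a.2, ha⟩
  have hpow : ∀ t : σ, x t ^ (p - 1) = if x t ≠ 0 then 1 else 0 := by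
    intro t
    split_ifs with h
    · exact ZMod.pow_card_sub_one_eq_one h
    · push_neg at h; rw [h, zero_pow hppos.ne']
  refine ⟨fun i => (Finset.univ.filter fun t : Fin (q i) => x ⟨i, t⟩ ≠ 0).card, ?_, ?_, ?_⟩
  · intro i
    exact (Finset.card_filter_le _ _).trans (by simp)
  · obtain ⟨t, ht⟩ : ∃ t : σ, x t ≠ 0 := by
      by_contra hcon; push_neg at hcon; exact hxne (funext hcon)
    refine ⟨t.1, ?_⟩
    rw [← Nat.pos_iff_ne_zero, Finset.card_pos]
    exact ⟨t.2, by simp [ht]⟩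
  · intro j
    rw [← ZMod.intCast_zmod_eq_zero_iff_dvd]
    push_cast
    have key := hxsol j
    rw [hf] at key
    simp only [map_sum, map_mul, eval_C, map_pow, eval_X] at key
    have hcardsum : ∀ i : Fin k,
        (((Finset.univ.filter fun t : Fin (q i) => x ⟨i, t⟩ ≠ 0).card : ZMod p))
          = ∑ t : Fin (q i), x ⟨i, t⟩ ^ (p - 1) := by
      intro i
      rw [Finset.card_filter]
      push_cast
      refine Finset.sum_congr rfl fun t _ => ?_
      rw [hpow ⟨i, t⟩]
    calc (∑ i, (((Finset.univ.filter fun t : Fin (q i) => x ⟨i, t⟩ ≠ 0).card : ZMod p) * (u i j : ZMod p)))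
        = ∑ i, ∑ t : Fin (q i), (u i j : ZMod p) * x ⟨i, t⟩ ^ (p - 1) := by
          refine Finset.sum_congr rfl fun i _ => ?_
          rw [hcardsum i, Finset.sum_mul]
          exact Finset.sum_congr rfl fun t _ => mul_comm _ _
      _ = ∑ t : σ, (u t.1 j : ZMod p) * x t ^ (p - 1) := by
          rw [← Finset.univ_sigma_univ, Finset.sum_sigma]
      _ = 0 := key
end

section
/- For every integer δ ≥ 1 there exist A ∈ ℤ^{2×2} with Δ(A) = δ, b ∈ ℤ^2, and c ∈ ℝ^2 such that: the linear program max{c^T x : Ax ≤ b} has a unique optimal solution w, the mixed-integer program with x_1 ∈ ℤ (and also the pure integer program) has a unique optimal solution z, and ‖w − z‖_∞ = δ − 1. -/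
open Matrix

/-- `x` is feasible for (I-MIP): `A x ≤ b` and `x j ∈ ℤ` for `j ∈ I`. -/
def mipFeasible {m n : ℕ} (A : Matrix (Fin m) (Fin n) ℤ) (b : Fin m → ℤ)
    (I : Finset (Fin n)) (x : Fin n → ℝ) : Prop :=
  (∀ i, (A.map (Int.cast : ℤ → ℝ)).mulVec x i ≤ (b i : ℝ)) ∧
  ∀ j ∈ I, ∃ z : ℤ, x j = (z : ℝ)

/-- `x` is an optimal solution of (I-MIP). -/
def mipOptimal {m n : ℕ} (A : Matrix (Fin m) (Fin n) ℤ) (b : Fin m → ℤ)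
    (c : Fin n → ℝ) (I : Finset (Fin n)) (x : Fin n → ℝ) : Prop :=
  mipFeasible A b I x ∧ ∀ y, mipFeasible A b I y → c ⬝ᵥ y ≤ c ⬝ᵥ x

/-- `Δ` is the largest absolute value of a determinant of a square submatrix of `A`. -/
def isMaxSubdet {m n : ℕ} (A : Matrix (Fin m) (Fin n) ℤ) (Δ : ℤ) : Prop :=
  (∀ k (f : Fin k → Fin m) (g : Fin k → Fin n), Function.Injective f →
    Function.Injective g → |(A.submatrix f g).det| ≤ Δ) ∧
  ∃ (k : ℕ) (f : Fin k → Fin m) (g : Fin k → Fin n), Function.Injective f ∧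
    Function.Injective g ∧ |(A.submatrix f g).det| = Δ

private lemma fin2cases (a : Fin 2) : a = 0 ∨ a = 1 := by omega

private lemma feas_iff (δ : ℤ) (x : Fin 2 → ℝ) :
    (∀ i, ((!![-δ, 0; δ, -1]).map (Int.cast : ℤ → ℝ)).mulVec x i
      ≤ ((![-1, 0] : Fin 2 → ℤ) i : ℝ)) ↔
    (1 ≤ (δ : ℝ) * x 0 ∧ (δ : ℝ) * x 0 ≤ x 1) := by
  constructor
  · intro h
    have h0 := h 0
    have h1 := h 1
    simp [Matrix.mulVec, dotProduct, Fin.sum_univ_two] at h0 h1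
    constructor <;> linarith
  · rintro ⟨h0, h1⟩ i
    fin_cases i <;>
      simp [Matrix.mulVec, dotProduct, Fin.sum_univ_two] <;> linarith

private lemma obj_eq (y : Fin 2 → ℝ) :
    (![0, -1] : Fin 2 → ℝ) ⬝ᵥ y = -(y 1) := by
  simp [dotProduct, Fin.sum_univ_two]

theorem lower_bound_example (δ : ℤ) (hδ : 1 ≤ δ) :
    ∃ (A : Matrix (Fin 2) (Fin 2) ℤ) (b : Fin 2 → ℤ) (c : Fin 2 → ℝ)
      (w z : Fin 2 → ℝ),
      isMaxSubdet A δ ∧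
      (mipOptimal A b c ∅ w ∧ ∀ w', mipOptimal A b c ∅ w' → w' = w) ∧
      (mipOptimal A b c {0} z ∧ ∀ z', mipOptimal A b c {0} z' → z' = z) ∧
      (mipOptimal A b c Finset.univ z ∧
        ∀ z', mipOptimal A b c Finset.univ z' → z' = z) ∧
      ‖w - z‖ = (δ : ℝ) - 1 := by
  have hδR : (1 : ℝ) ≤ (δ : ℝ) := by exact_mod_cast hδ
  have hδpos : (0 : ℝ) < (δ : ℝ) := by linarith
  have hδne : (δ : ℝ) ≠ 0 := ne_of_gt hδpos
  have hinv : (δ : ℝ) * (δ : ℝ)⁻¹ = 1 := mul_inv_cancel₀ hδne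
  refine ⟨!![-δ, 0; δ, -1], ![-1, 0], ![0, -1], ![(δ : ℝ)⁻¹, 1], ![1, (δ : ℝ)],
    ?_, ?_, ?_, ?_, ?_⟩
  · -- isMaxSubdet
    constructor
    · intro k f g hf hg
      match k with
      | 0 =>
        simp [Matrix.det_fin_zero]
        omega
      | 1 =>
        rw [Matrix.det_fin_one]
        rcases fin2cases (f 0) with h1 | h1 <;> rcases fin2cases (g 0) with h2 | h2 <;>
          simp [Matrix.submatrix_apply, h1, h2] <;>
          first
          | omega
          | (rw [abs_le]; constructor <;> omega)
      | 2 =>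
        rcases fin2cases (f 0) with h1 | h1 <;> rcases fin2cases (f 1) with h2 | h2 <;>
          rcases fin2cases (g 0) with h3 | h3 <;> rcases fin2cases (g 1) with h4 | h4 <;>
          first
          | exact absurd (hf (h1.trans h2.symm)) (by decide)
          | exact absurd (hg (h3.trans h4.symm)) (by decide)
          | (rw [Matrix.det_fin_two]
             simp [Matrix.submatrix_apply, h1, h2, h3, h4]
             rw [abs_le]; constructor <;> omega)
      | (k + 3) =>
        have := Fintype.card_le_of_injective f hf
        simp at this
    · refine ⟨2, id, id, Function.injective_id, Function.injective_id, ?_⟩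
      rw [Matrix.submatrix_id_id, Matrix.det_fin_two]
      simp
      omega
  · -- LP : unique optimum w = (1/δ, 1)
    have hwfeas : mipFeasible !![-δ, 0; δ, -1] ![-1, 0] ∅ ![(δ : ℝ)⁻¹, 1] := by
      refine ⟨(feas_iff δ _).2 ?_, by simp⟩
      simp [hinv]
    have hwopt : mipOptimal !![-δ, 0; δ, -1] ![-1, 0] ![0, -1] ∅ ![(δ : ℝ)⁻¹, 1] := by
      refine ⟨hwfeas, fun y hy => ?_⟩
      obtain ⟨hy1, hy2⟩ := (feas_iff δ y).1 hy.1
      rw [obj_eq, obj_eq]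
      simp
      linarith
    refine ⟨hwopt, fun w' hw' => ?_⟩
    obtain ⟨h1, h2⟩ := (feas_iff δ w').1 hw'.1.1
    have hle := hw'.2 _ hwfeas
    rw [obj_eq, obj_eq] at hle
    simp at hle
    have hw1 : w' 1 = 1 := by linarith
    have hw0 : w' 0 = (δ : ℝ)⁻¹ := by
      have : (δ : ℝ) * w' 0 = 1 := by linarith
      field_simp at this ⊢
      linarith
    funext i
    fin_cases i <;> simp [hw0, hw1]
  · -- MIP with I = {0}
    have hint : ∀ y : Fin 2 → ℝ, (∃ n : ℤ, y 0 = (n : ℝ)) →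
        1 ≤ (δ : ℝ) * y 0 → (1 : ℝ) ≤ y 0 := by
      rintro y ⟨n, hn⟩ h
      rw [hn] at h ⊢
      have : (1 : ℤ) ≤ δ * n := by exact_mod_cast h
      have : (1 : ℤ) ≤ n := by nlinarith
      exact_mod_cast this
    have hzfeas : mipFeasible !![-δ, 0; δ, -1] ![-1, 0] {0} ![1, (δ : ℝ)] := by
      refine ⟨(feas_iff δ _).2 ?_, ?_⟩
      · simp; linarith
      · intro j hj
        fin_cases hj
        exact ⟨1, by simp⟩
    have hzopt : mipOptimal !![-δ, 0; δ, -1] ![-1, 0] ![0, -1] {0} ![1, (δ : ℝ)] := by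
      refine ⟨hzfeas, fun y hy => ?_⟩
      obtain ⟨hy1, hy2⟩ := (feas_iff δ y).1 hy.1
      have hy0 : (1 : ℝ) ≤ y 0 := hint y (hy.2 0 (by simp)) hy1
      rw [obj_eq, obj_eq]
      simp
      nlinarith
    refine ⟨hzopt, fun z' hz' => ?_⟩
    obtain ⟨h1, h2⟩ := (feas_iff δ z').1 hz'.1.1
    have hz0 : (1 : ℝ) ≤ z' 0 := hint z' (hz'.1.2 0 (by simp)) h1
    have hle := hz'.2 _ hzfeas
    rw [obj_eq, obj_eq] at hle
    simp at hle
    have hz1 : z' 1 = (δ : ℝ) := by nlinarith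
    have hz0' : z' 0 = 1 := by nlinarith
    funext i
    fin_cases i <;> simp [hz0', hz1]
  · -- MIP with I = univ
    have hint : ∀ y : Fin 2 → ℝ, (∃ n : ℤ, y 0 = (n : ℝ)) →
        1 ≤ (δ : ℝ) * y 0 → (1 : ℝ) ≤ y 0 := by
      rintro y ⟨n, hn⟩ h
      rw [hn] at h ⊢
      have : (1 : ℤ) ≤ δ * n := by exact_mod_cast h
      have : (1 : ℤ) ≤ n := by nlinarith
      exact_mod_cast this
    have hzfeas : mipFeasible !![-δ, 0; δ, -1] ![-1, 0] Finset.univ ![1, (δ : ℝ)] := by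
      refine ⟨(feas_iff δ _).2 ?_, ?_⟩
      · simp; linarith
      · intro j _
        fin_cases j
        · exact ⟨1, by simp⟩
        · exact ⟨δ, by simp⟩
    have hzopt : mipOptimal !![-δ, 0; δ, -1] ![-1, 0] ![0, -1] Finset.univ
        ![1, (δ : ℝ)] := by
      refine ⟨hzfeas, fun y hy => ?_⟩
      obtain ⟨hy1, hy2⟩ := (feas_iff δ y).1 hy.1
      have hy0 : (1 : ℝ) ≤ y 0 := hint y (hy.2 0 (by simp)) hy1
      rw [obj_eq, obj_eq]
      simp
      nlinarith
    refine ⟨hzopt, fun z' hz' => ?_⟩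
    obtain ⟨h1, h2⟩ := (feas_iff δ z').1 hz'.1.1
    have hz0 : (1 : ℝ) ≤ z' 0 := hint z' (hz'.1.2 0 (by simp)) h1
    have hle := hz'.2 _ hzfeas
    rw [obj_eq, obj_eq] at hle
    simp at hle
    have hz1 : z' 1 = (δ : ℝ) := by nlinarith
    have hz0' : z' 0 = 1 := by nlinarith
    funext i
    fin_cases i <;> simp [hz0', hz1]
  · -- norm
    have hinv2 : (δ : ℝ)⁻¹ ≤ 1 := by
      rw [inv_le_one_iff₀]; right; exact hδR
    have hinvpos : (0 : ℝ) < (δ : ℝ)⁻¹ := by positivity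
    apply le_antisymm
    · apply pi_norm_le_iff_of_nonneg (by linarith) |>.2
      intro i
      fin_cases i <;> simp [Real.norm_eq_abs]
      · rw [abs_le]
        constructor <;> nlinarith
      · rw [abs_le]
        constructor <;> simp <;> linarith
    · have := norm_le_pi_norm (![(δ : ℝ)⁻¹, 1] - ![1, (δ : ℝ)]) 1
      simp [Real.norm_eq_abs] at this
      calc (δ : ℝ) - 1 = |1 - (δ : ℝ)| := by rw [abs_sub_comm, abs_of_nonneg]; linarith
        _ ≤ _ := this
end

section
/- Let A ∈ ℤ^{m×n}, b ∈ ℤ^m, and let C = {x : A_1 x ≤ 0, A_2 x ≥ 0} where (A_1; A_2) is a row partition of A. Suppose w, z̃ ∈ ℝ^n satisfy Aw ≤ b and A z̃ ≤ b, with A_1(z̃ − w) < 0 componentwise and A_2(z̃ − w) ≥ 0 componentwise. Then for any v^1,...,v^k ∈ C and λ_i ≥ γ_i ≥ 0 with z̃ − w = ∑ λ_i v^i, the points z := w + ∑(λ_i − γ_i)v^i and w̃ := w + ∑ γ_i v^i satisfy Az ≤ b and Aw̃ ≤ b. -/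
open Matrix

private lemma mulVec_add_sum {m n k : ℕ} (M : Matrix (Fin m) (Fin n) ℝ)
    (x : Fin n → ℝ) (c : Fin k → ℝ) (v : Fin k → Fin n → ℝ) :
    M.mulVec (x + ∑ l, c l • v l) = M.mulVec x + ∑ l, c l • M.mulVec (v l) := by
  have := map_sum (M.mulVecLin) (fun l => c l • v l) Finset.univ
  simp only [_root_.map_smul] at this
  simp only [← Matrix.mulVecLin_apply, map_add, this]

private lemma generic {m₁ m₂ n k : ℕ}
    (A₁ : Matrix (Fin m₁) (Fin n) ℤ) (A₂ : Matrix (Fin m₂) (Fin n) ℤ)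
    (b₁ : Fin m₁ → ℤ) (b₂ : Fin m₂ → ℤ) (w ztil : Fin n → ℝ)
    (hw₁ : ∀ i, (A₁.map (Int.cast : ℤ → ℝ)).mulVec w i ≤ (b₁ i : ℝ))
    (hz₂ : ∀ i, (A₂.map (Int.cast : ℤ → ℝ)).mulVec ztil i ≤ (b₂ i : ℝ))
    (v : Fin k → Fin n → ℝ)
    (hv₁ : ∀ l i, (A₁.map (Int.cast : ℤ → ℝ)).mulVec (v l) i ≤ 0)
    (hv₂ : ∀ l i, 0 ≤ (A₂.map (Int.cast : ℤ → ℝ)).mulVec (v l) i)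
    (lam c : Fin k → ℝ) (hc0 : ∀ l, 0 ≤ c l) (hcl : ∀ l, c l ≤ lam l)
    (hdecomp : ztil - w = ∑ l, lam l • v l) :
    (∀ i, (A₁.map (Int.cast : ℤ → ℝ)).mulVec (w + ∑ l, c l • v l) i ≤ (b₁ i : ℝ)) ∧
    (∀ i, (A₂.map (Int.cast : ℤ → ℝ)).mulVec (w + ∑ l, c l • v l) i ≤ (b₂ i : ℝ)) := by
  constructor
  · intro i
    rw [mulVec_add_sum]
    have h : (∑ l, c l • (A₁.map (Int.cast : ℤ → ℝ)).mulVec (v l)) i ≤ 0 := by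
      rw [Finset.sum_apply]
      apply Finset.sum_nonpos
      intro l _
      exact mul_nonpos_of_nonneg_of_nonpos (hc0 l) (hv₁ l i)
    have := hw₁ i
    simpa using add_le_of_le_of_nonpos this h
  · intro i
    have hx : w + ∑ l, c l • v l = ztil - ∑ l, (lam l - c l) • v l := by
      have : ztil = w + ∑ l, lam l • v l := by
        rw [← hdecomp]; ring_nf
      rw [this]
      simp only [sub_smul, Finset.sum_sub_distrib]
      abel
    rw [hx]
    have hx2 : ztil - ∑ l, (lam l - c l) • v l
        = ztil + ∑ l, (-(lam l - c l)) • v l := by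
      rw [sub_eq_add_neg, ← Finset.sum_neg_distrib]
      simp only [neg_smul]
    rw [hx2, mulVec_add_sum]
    have h : (∑ l, (-(lam l - c l)) • (A₂.map (Int.cast : ℤ → ℝ)).mulVec (v l)) i ≤ 0 := by
      rw [Finset.sum_apply]
      apply Finset.sum_nonpos
      intro l _
      have : 0 ≤ lam l - c l := sub_nonneg.2 (hcl l)
      simpa using mul_nonpos_of_nonpos_of_nonneg (by linarith) (hv₂ l i)
    have := hz₂ i
    simpa using add_le_of_le_of_nonpos this h

theorem feasibility_exchange (m₁ m₂ n k : ℕ)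
    (A₁ : Matrix (Fin m₁) (Fin n) ℤ) (A₂ : Matrix (Fin m₂) (Fin n) ℤ)
    (b₁ : Fin m₁ → ℤ) (b₂ : Fin m₂ → ℤ) (w ztil : Fin n → ℝ)
    (hw₁ : ∀ i, (A₁.map (Int.cast : ℤ → ℝ)).mulVec w i ≤ (b₁ i : ℝ))
    (hw₂ : ∀ i, (A₂.map (Int.cast : ℤ → ℝ)).mulVec w i ≤ (b₂ i : ℝ))
    (hz₁ : ∀ i, (A₁.map (Int.cast : ℤ → ℝ)).mulVec ztil i ≤ (b₁ i : ℝ))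
    (hz₂ : ∀ i, (A₂.map (Int.cast : ℤ → ℝ)).mulVec ztil i ≤ (b₂ i : ℝ))
    (hdir₁ : ∀ i, (A₁.map (Int.cast : ℤ → ℝ)).mulVec (ztil - w) i < 0)
    (hdir₂ : ∀ i, 0 ≤ (A₂.map (Int.cast : ℤ → ℝ)).mulVec (ztil - w) i)
    (v : Fin k → Fin n → ℝ)
    (hv₁ : ∀ l i, (A₁.map (Int.cast : ℤ → ℝ)).mulVec (v l) i ≤ 0)
    (hv₂ : ∀ l i, 0 ≤ (A₂.map (Int.cast : ℤ → ℝ)).mulVec (v l) i)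
    (lam gam : Fin k → ℝ) (hγ : ∀ l, 0 ≤ gam l) (hgl : ∀ l, gam l ≤ lam l)
    (hdecomp : ztil - w = ∑ l, lam l • v l) :
    (∀ i, (A₁.map (Int.cast : ℤ → ℝ)).mulVec
        (w + ∑ l, (lam l - gam l) • v l) i ≤ (b₁ i : ℝ)) ∧
    (∀ i, (A₂.map (Int.cast : ℤ → ℝ)).mulVec
        (w + ∑ l, (lam l - gam l) • v l) i ≤ (b₂ i : ℝ)) ∧
    (∀ i, (A₁.map (Int.cast : ℤ → ℝ)).mulVec
        (w + ∑ l, gam l • v l) i ≤ (b₁ i : ℝ)) ∧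
    (∀ i, (A₂.map (Int.cast : ℤ → ℝ)).mulVec
        (w + ∑ l, gam l • v l) i ≤ (b₂ i : ℝ)) := by
  obtain ⟨h1, h2⟩ := generic A₁ A₂ b₁ b₂ w ztil hw₁ hz₂ v hv₁ hv₂ lam
    (fun l => lam l - gam l) (fun l => sub_nonneg.2 (hgl l))
    (fun l => by have := hγ l; linarith) hdecomp
  obtain ⟨h3, h4⟩ := generic A₁ A₂ b₁ b₂ w ztil hw₁ hz₂ v hv₁ hv₂ lam
    gam hγ hgl hdecomp
  exact ⟨h1, h2, h3, h4⟩
end
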